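/- arXiv:2503.20395 — 2 statements merged into one kernel-verified Lean document; each statement's English description precedes it below -/
import Mathlib

section
/- Let n be an odd positive integer, G a group, and ρ₁, ρ₂ : G → SL(n,ℝ) group homomorphisms. If there exists an invertible complex n×n matrix M such that M·ρ₁(g) = ρ₂(g)·M for all g ∈ G, then there exists a real matrix M' with det M' = 1 such that M'·ρ₁(g) = ρ₂(g)·M' for all g ∈ G. -/
/-!
Write `M = A + iB` with `A, B` real. Taking real and imaginary parts of the intertwining relation
shows that `A` and `B`, hence every `A + tB` with `t` real, intertwine `ρ₁` and `ρ₂`. The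
polynomial `t ↦ det (A + tB)` does not vanish at `t = i`, so it is nonzero and has a real
non-root `t`. Since `n` is odd, the nonzero real `det (A + tB)` has a real `n`-th root, and
dividing `A + tB` by it gives determinant one.
-/

open Matrix Polynomial

theorem Real.exists_pow_eq_of_odd {n : ℕ} (hn : Odd n) (x : ℝ) : ∃ c : ℝ, c ^ n = x := by
  rcases le_total 0 x with hx | hx
  · exact ⟨x ^ (n⁻¹ : ℝ), Real.rpow_inv_natCast_pow hx hn.pos.ne'⟩
  · refine ⟨-(-x) ^ (n⁻¹ : ℝ), ?_⟩
    rw [hn.neg_pow, Real.rpow_inv_natCast_pow (neg_nonneg.mpr hx) hn.pos.ne', neg_neg]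

theorem Matrix.exists_det_smul_eq_one {ι : Type*} [Fintype ι] [DecidableEq ι]
    (hodd : Odd (Fintype.card ι)) {N : Matrix ι ι ℝ} (hN : N.det ≠ 0) :
    ∃ c : ℝ, (c • N).det = 1 := by
  obtain ⟨c, hc⟩ := Real.exists_pow_eq_of_odd hodd N.det⁻¹
  exact ⟨c, by rw [det_smul, hc, inv_mul_cancel₀ hN]⟩

section Intertwining

variable {R L : Type*} [CommSemiring R] [Semiring L] [Algebra R L] {m n p : Type*}

theorem Matrix.map_mul_map_algebraMap [Fintype n] (f : L →ₗ[R] R) (M : Matrix m n L)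
    (X : Matrix n p R) :
    (M * X.map (algebraMap R L)).map f = M.map f * X := by
  ext i j
  simp [mul_apply, ← Algebra.commutes, ← Algebra.smul_def, mul_comm]

theorem Matrix.map_map_algebraMap_mul [Fintype m] (f : L →ₗ[R] R) (Y : Matrix p m R)
    (M : Matrix m n L) :
    (Y.map (algebraMap R L) * M).map f = Y * M.map f := by
  ext i j
  simp [mul_apply, ← Algebra.smul_def]

theorem Matrix.map_mul_eq_mul_map_of_mul_eq_mul [Fintype m] [Fintype n] (f : L →ₗ[R] R)
    {X : Matrix n n R} {Y : Matrix m m R} {M : Matrix m n L}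
    (h : M * X.map (algebraMap R L) = Y.map (algebraMap R L) * M) :
    M.map f * X = Y * M.map f := by
  rw [← map_mul_map_algebraMap, h, map_map_algebraMap_mul]

end Intertwining

theorem Matrix.aeval_det_map_C_add_X_smul_map_C {R L : Type*} [CommRing R] [CommRing L]
    [Algebra R L] {n : Type*} [Fintype n] [DecidableEq n] (A B : Matrix n n R) (x : L) :
    aeval x (A.map C + (X : R[X]) • B.map C).det
      = (A.map (algebraMap R L) + x • B.map (algebraMap R L)).det := by
  rw [AlgHom.map_det]
  congr 1
  ext i j
  simp only [map_apply, add_apply, smul_apply, smul_eq_mul, AlgHom.mapMatrix_apply, map_add,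
    map_mul, aeval_C, aeval_X]

theorem Matrix.exists_det_add_smul_ne_zero {K L : Type*} [CommRing K] [IsDomain K] [Infinite K]
    [CommRing L] [Algebra K L] {n : Type*} [Fintype n] [DecidableEq n] (A B : Matrix n n K)
    (x : L) (h : (A.map (algebraMap K L) + x • B.map (algebraMap K L)).det ≠ 0) :
    ∃ t : K, (A + t • B).det ≠ 0 := by
  set p : K[X] := (A.map C + (X : K[X]) • B.map C).det with hp
  have hp0 : p ≠ 0 := by
    rintro hp0
    rw [← aeval_det_map_C_add_X_smul_map_C, ← hp, hp0, map_zero] at h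
    exact h rfl
  obtain ⟨t, ht⟩ : ∃ t : K, aeval t p ≠ 0 := by
    by_contra! H
    exact hp0 (zero_of_eval_zero p fun t => by simpa using H t)
  refine ⟨t, ?_⟩
  simpa [hp, aeval_det_map_C_add_X_smul_map_C] using ht

theorem Complex.map_re_add_I_smul_map_im {m n : Type*} (M : Matrix m n ℂ) :
    (M.map re).map (algebraMap ℝ ℂ) + I • (M.map im).map (algebraMap ℝ ℂ) = M := by
  ext i j
  simp [Complex.ext_iff]

theorem sl_real_conjugacy_of_complex_conjugacy_general
    (n : ℕ) (hodd : Odd n) (G : Type*) [Group G]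
    (ρ₁ ρ₂ : G →* Matrix.SpecialLinearGroup (Fin n) ℝ)
    (M : Matrix (Fin n) (Fin n) ℂ) (hM : IsUnit M)
    (h : ∀ g : G, M * ((ρ₁ g : Matrix (Fin n) (Fin n) ℝ).map (Complex.ofReal ·))
        = ((ρ₂ g : Matrix (Fin n) (Fin n) ℝ).map (Complex.ofReal ·)) * M) :
    ∃ M' : Matrix (Fin n) (Fin n) ℝ, M'.det = 1 ∧
      ∀ g : G, M' * (ρ₁ g : Matrix (Fin n) (Fin n) ℝ)
        = (ρ₂ g : Matrix (Fin n) (Fin n) ℝ) * M' := by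
  obtain ⟨t, ht⟩ := exists_det_add_smul_ne_zero (M.map Complex.re) (M.map Complex.im) Complex.I
    (by rw [Complex.map_re_add_I_smul_map_im]; exact (M.isUnit_iff_isUnit_det.mp hM).ne_zero)
  set N := M.map Complex.re + t • M.map Complex.im
  have hN_eq : M.map (Complex.reLm + t • Complex.imLm) = N := by
    ext i j
    simp [N]
  have hN (g : G) : N * ρ₁ g = ρ₂ g * N := by
    rw [← hN_eq]
    exact map_mul_eq_mul_map_of_mul_eq_mul _ (by simpa [Complex.coe_algebraMap] using h g)
  obtain ⟨c, hc⟩ := exists_det_smul_eq_one (by rwa [Fintype.card_fin]) ht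
  exact ⟨c • N, hc, fun g => by rw [Matrix.smul_mul, Matrix.mul_smul, hN]⟩

/-- For `n` odd, two `SL(n,ℝ)` representations of a group that are conjugate by an
invertible complex matrix are conjugate by a real matrix of determinant one. -/
theorem sl_real_conjugacy_of_complex_conjugacy
    (n : ℕ) (hn : 0 < n) (hodd : Odd n) (G : Type*) [Group G]
    (ρ₁ ρ₂ : G →* Matrix.SpecialLinearGroup (Fin n) ℝ)
    (M : Matrix (Fin n) (Fin n) ℂ) (hM : IsUnit M)
    (h : ∀ g : G, M * ((ρ₁ g : Matrix (Fin n) (Fin n) ℝ).map (Complex.ofReal ·))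
        = ((ρ₂ g : Matrix (Fin n) (Fin n) ℝ).map (Complex.ofReal ·)) * M) :
    ∃ M' : Matrix (Fin n) (Fin n) ℝ, M'.det = 1 ∧
      ∀ g : G, M' * (ρ₁ g : Matrix (Fin n) (Fin n) ℝ)
        = (ρ₂ g : Matrix (Fin n) (Fin n) ℝ) * M' :=
  sl_real_conjugacy_of_complex_conjugacy_general n hodd G ρ₁ ρ₂ M hM h
end

section
/- Let ρ : Γ → SL(4,ℝ) be a semisimple group homomorphism such that ρ(a) is conjugate in GL(4,ℝ) to the block-diagonal matrix R ⊕ R, where R is the 2×2 rotation matrix of angle 2π/3. Then there exists a 2-dimensional ρ-invariant linear subspace of ℝ⁴. -/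
open Matrix

/-- The relations of the turnover group `Γ = ⟨a, b ∣ a³ = b³ = (ab)³ = 1⟩`. -/
def turnoverRels : Set (FreeGroup (Fin 2)) :=
  {FreeGroup.of 0 ^ 3, FreeGroup.of 1 ^ 3, (FreeGroup.of 0 * FreeGroup.of 1) ^ 3}

/-- The orbifold fundamental group of the Euclidean turnover `S²(3,3,3)`. -/
abbrev TurnoverGroup : Type := PresentedGroup turnoverRels

/-- The generator `a` of `Γ`. -/
def ga : TurnoverGroup := PresentedGroup.of 0

/-- A representation `ρ : G → SL(n,ℝ)` is semisimple if `ℝⁿ` is a semisimple module for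
the induced `ℝ[G]`-action, i.e. every `ρ`-invariant subspace admits a `ρ`-invariant
complement. -/
def IsSemisimpleRep {n : ℕ} {G : Type*} [Group G]
    (ρ : G →* Matrix.SpecialLinearGroup (Fin n) ℝ) : Prop :=
  ∀ W : Submodule ℝ (Fin n → ℝ),
    (∀ g : G, ∀ w ∈ W, (ρ g : Matrix (Fin n) (Fin n) ℝ) *ᵥ w ∈ W) →
      ∃ W' : Submodule ℝ (Fin n → ℝ),
        (∀ g : G, ∀ w ∈ W', (ρ g : Matrix (Fin n) (Fin n) ℝ) *ᵥ w ∈ W') ∧ IsCompl W W'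

/-- The block-diagonal matrix `R ⊕ R`, where `R` is the rotation of angle `2π/3`. -/
noncomputable def rotRot : Matrix (Fin 4) (Fin 4) ℝ :=
  !![-1/2, -Real.sqrt 3 / 2, 0, 0;
     Real.sqrt 3 / 2, -1/2, 0, 0;
     0, 0, -1/2, -Real.sqrt 3 / 2;
     0, 0, Real.sqrt 3 / 2, -1/2]

/-!
Since `A = ρ(a)` satisfies `A² + A + 1 = 0`, it makes `ℝ⁴` a complex plane `ℂ²` on which `A` acts
as `ω = e^{2πi/3}`. The relations of `Γ` make `S = ρ(ab⁻¹)` commute with its conjugate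
`A S A⁻¹`. Writing `S = P + Q` with `P` complex linear and `Q` conjugate linear, we get
`A S A⁻¹ = P + ω² Q`, and the linear and conjugate linear parts of `[S, A S A⁻¹] = 0` give
`P Q = Q P` and `Q² = 0`. If `Q = 0`, a complex eigenline of `S` is an `A`- and `S`-invariant
plane. Otherwise `ker Q` is invariant under `A`, `P` and `Q`, and its real dimension is even (it is
a complex subspace) and strictly between `0` and `4`, hence `2`. Since `a` and `ab⁻¹` generate
`Γ`, such a plane is `ρ`-invariant.
-/

open Module

theorem commute_mul_inv_conj {G : Type*} [Group G] {a b : G} (ha : a ^ 3 = 1) (hb : b ^ 3 = 1)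
    (hab : (a * b) ^ 3 = 1) : Commute (a * b⁻¹) (a * (a * b⁻¹) * a ^ 2) := by
  have ha' : a⁻¹ = a * a := inv_eq_of_mul_eq_one_right (by rw [← pow_three, ha])
  have hb' : (b * b)⁻¹ = b := inv_eq_of_mul_eq_one_left (by rw [← pow_three, hb])
  have hab' : (a * b * (a * b))⁻¹ = a * b := inv_eq_of_mul_eq_one_left (by rw [← pow_three, hab])
  rw [pow_two, ← ha']
  calc a * b⁻¹ * (a * (a * b⁻¹) * a⁻¹) = a * (b⁻¹ * (a * a) * b⁻¹ * a⁻¹) := by group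
    _ = a * (a * b * (a * b))⁻¹ := by rw [← ha']; group
    _ = a * a * (b * b)⁻¹ := by rw [hab', hb']; group
    _ = a * (a * b⁻¹) * a⁻¹ * (a * b⁻¹) := by group

section CubeRootOfUnity

variable {R : Type*} [Ring R] {A : R}

/- `Q * A = A ^ 2 * Q` says that `Q` is conjugate linear for the complex structure in which `A`
acts as `ω`, since `ω̄ = ω²`. -/

theorem pow_three_eq_one_of_sq_add_self_add_one (hA : A ^ 2 + A + 1 = 0) : A ^ 3 = 1 := by
  calc A ^ 3 = (A - 1) * (A ^ 2 + A + 1) + 1 := by noncomm_ring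
    _ = 1 := by rw [hA, mul_zero, zero_add]

theorem two_mul_add_one_mul_self (hA : A ^ 2 + A + 1 = 0) : (2 * A + 1) * (2 * A + 1) = -3 := by
  calc (2 * A + 1) * (2 * A + 1) = 4 * (A ^ 2 + A + 1) - 3 := by noncomm_ring; norm_num
    _ = -3 := by rw [hA, mul_zero, zero_sub]

theorem mul_self_eq_neg_one_of_sq_add_self_add_one [Algebra ℝ R] (hA : A ^ 2 + A + 1 = 0) :
    ((√3)⁻¹ • (2 * A + 1)) * ((√3)⁻¹ • (2 * A + 1)) = -1 := by
  have h3 : (3 : R) = (3 : ℝ) • (1 : R) := by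
    rw [ofNat_smul_eq_nsmul, nsmul_eq_mul, mul_one, Nat.cast_ofNat]
  rw [smul_mul_smul_comm, two_mul_add_one_mul_self hA, ← mul_inv,
    Real.mul_self_sqrt (by norm_num), h3, smul_neg, smul_smul, inv_mul_cancel₀ three_ne_zero,
    one_smul]

theorem eq_zero_of_sub_one_mul_eq_zero (hA : A ^ 2 + A + 1 = 0) (h3 : IsUnit (3 : R)) {Y : R}
    (h : (A - 1) * Y = 0) : Y = 0 := by
  refine h3.mul_right_eq_zero.mp ?_
  calc 3 * Y = (A ^ 2 + A + 1) * Y - (A + 2) * ((A - 1) * Y) := by noncomm_ring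
    _ = 0 := by rw [hA, h]; noncomm_ring

theorem mul_sq_eq_mul_of_mul_eq_sq_mul (hA : A ^ 2 + A + 1 = 0) {Q : R}
    (hQ : Q * A = A ^ 2 * Q) : Q * A ^ 2 = A * Q := by
  calc Q * A ^ 2 = A ^ 3 * A * Q := by rw [pow_two, ← mul_assoc, hQ, mul_assoc, hQ]; noncomm_ring
    _ = A * Q := by rw [pow_three_eq_one_of_sq_add_self_add_one hA, one_mul]

theorem eq_zero_of_add_eq_zero_of_commute (hA : A ^ 2 + A + 1 = 0) (h3 : IsUnit (3 : R))
    {X Y : R} (hX : Commute X A) (hY : Y * A = A ^ 2 * Y) (h : X + Y = 0) : Y = 0 := by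
  refine eq_zero_of_sub_one_mul_eq_zero hA h3 ?_
  calc (A - 1) * Y = A ^ 3 * (A - 1) * Y := by
        rw [pow_three_eq_one_of_sq_add_self_add_one hA, one_mul]
    _ = A ^ 2 * (X * A + Y * A - A * (X + Y)) := by rw [hX.eq, hY]; noncomm_ring
    _ = 0 := by rw [← add_mul, h]; noncomm_ring

theorem exists_add_eq_three_mul (hA : A ^ 2 + A + 1 = 0) (S : R) :
    ∃ P Q : R, P + Q = 3 * S ∧ Commute P A ∧ Q * A = A ^ 2 * Q := by
  have hA3 := pow_three_eq_one_of_sq_add_self_add_one hA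
  refine ⟨S + A * S * A ^ 2 + A ^ 2 * S * A, S + S - A * S * A ^ 2 - A ^ 2 * S * A,
    by noncomm_ring, ?_, ?_⟩
  · calc (S + A * S * A ^ 2 + A ^ 2 * S * A) * A
          = S * A + A * S * A ^ 3 + A ^ 2 * S * A ^ 2 := by noncomm_ring
      _ = A * S + A ^ 2 * S * A ^ 2 + A ^ 3 * S * A := by rw [hA3]; noncomm_ring
      _ = A * (S + A * S * A ^ 2 + A ^ 2 * S * A) := by noncomm_ring
  · have h2 : A ^ 2 = -A - 1 := by rw [← sub_eq_zero, ← hA]; noncomm_ring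
    have h2' : ∀ x : R, A * (A * x) = -(A * x) - x := fun x => by
      rw [← mul_assoc, ← pow_two, h2, sub_mul, neg_mul, one_mul]
    simp only [h2, mul_add, add_mul, mul_sub, sub_mul, mul_neg, neg_mul, mul_one, one_mul,
      mul_assoc, h2', ← pow_two]
    abel

theorem conj_add_eq_add_sq_mul (hA : A ^ 2 + A + 1 = 0) {P Q : R} (hP : Commute P A)
    (hQ : Q * A = A ^ 2 * Q) : A * (P + Q) * A ^ 2 = P + A ^ 2 * Q := by
  calc A * (P + Q) * A ^ 2 = A * P * A ^ 2 + A * (Q * A ^ 2) := by noncomm_ring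
    _ = P * A ^ 3 + A * (A * Q) := by
      rw [← hP.eq, mul_sq_eq_mul_of_mul_eq_sq_mul hA hQ]; noncomm_ring
    _ = P + A ^ 2 * Q := by rw [pow_three_eq_one_of_sq_add_self_add_one hA]; noncomm_ring

theorem commute_and_mul_self_eq_zero_of_commute_conj (hA : A ^ 2 + A + 1 = 0)
    (h3 : IsUnit (3 : R)) {P Q : R} (hP : Commute P A) (hQ : Q * A = A ^ 2 * Q)
    (h : Commute (P + Q) (A * (P + Q) * A ^ 2)) : Commute P Q ∧ Q * Q = 0 := by
  have hAu : IsUnit A := .of_pow_eq_one (pow_three_eq_one_of_sq_add_self_add_one hA) three_ne_zero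
  have hQ2 := mul_sq_eq_mul_of_mul_eq_sq_mul hA hQ
  have hPA2 : P * A ^ 2 = A ^ 2 * P := (hP.pow_right 2).eq
  have hsum : (A - A ^ 2) * (Q * Q) + (A ^ 2 - 1) * (P * Q - Q * P) = 0 := by
    have e1 : P * (A ^ 2 * Q) = A ^ 2 * (P * Q) := by rw [← mul_assoc, hPA2, mul_assoc]
    have e2 : Q * (A ^ 2 * Q) = A * (Q * Q) := by rw [← mul_assoc, hQ2, mul_assoc]
    calc _ = (P + Q) * (P + A ^ 2 * Q) - (P + A ^ 2 * Q) * (P + Q) := by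
          simp only [mul_add, add_mul, e1, e2]; noncomm_ring
      _ = 0 := by rw [← conj_add_eq_add_sq_mul hA hP hQ, h.eq, sub_self]
  -- The first summand commutes with `A` and the second is conjugate linear, so both vanish.
  have hX : Commute ((A - A ^ 2) * (Q * Q)) A := by
    refine ((Commute.refl A).sub_left ((Commute.refl A).pow_left 2)).mul_left ?_
    show Q * Q * A = A * (Q * Q)
    rw [mul_assoc, hQ, ← mul_assoc, hQ2, mul_assoc]
  have hZ : (P * Q - Q * P) * A = A ^ 2 * (P * Q - Q * P) := by
    calc (P * Q - Q * P) * A = P * (Q * A) - Q * (P * A) := by noncomm_ring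
      _ = A ^ 2 * (P * Q - Q * P) := by
        rw [hQ, hP.eq, ← mul_assoc, hPA2, ← mul_assoc Q, hQ]; noncomm_ring
  have hY0 := eq_zero_of_add_eq_zero_of_commute hA h3 hX (by rw [mul_assoc, hZ]; noncomm_ring) hsum
  rw [hY0, add_zero] at hsum
  constructor
  · have h1 : (A - 1) * ((A + 1) * (P * Q - Q * P)) = 0 := by rw [← hY0]; noncomm_ring
    have h2 := eq_zero_of_sub_one_mul_eq_zero hA h3 h1
    rwa [show A + 1 = -A ^ 2 by rw [← sub_eq_zero, ← hA]; noncomm_ring, neg_mul, neg_eq_zero,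
      (hAu.pow 2).mul_right_eq_zero, sub_eq_zero] at h2
  · have h1 : (A - 1) * (A * (Q * Q)) = 0 := by rw [← neg_eq_zero, ← hsum]; noncomm_ring
    exact hAu.mul_right_eq_zero.mp (eq_zero_of_sub_one_mul_eq_zero hA h3 h1)

theorem exists_commute_and_mul_self_eq_zero (hA : A ^ 2 + A + 1 = 0) (h3 : IsUnit (3 : R))
    {S : R} (hS : Commute S (A * S * A ^ 2)) :
    ∃ P Q : R, P + Q = 3 * S ∧ Commute P A ∧ Q * A = A ^ 2 * Q ∧ Commute P Q ∧ Q * Q = 0 := by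
  obtain ⟨P, Q, hPQ, hP, hQ⟩ := exists_add_eq_three_mul hA S
  have h : Commute (P + Q) (A * (P + Q) * A ^ 2) := by
    rw [hPQ, show A * (3 * S) * A ^ 2 = 3 * (A * S * A ^ 2) by noncomm_ring]
    exact (Commute.ofNat_left 3 _).mul_left ((Commute.ofNat_right S 3).mul_right hS)
  exact ⟨P, Q, hPQ, hP, hQ, commute_and_mul_self_eq_zero_of_commute_conj hA h3 hP hQ h⟩

end CubeRootOfUnity

theorem sq_add_self_add_one_eq_zero_of_conj {R : Type*} [Ring R] (u : Rˣ) {M N : R}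
    (h : ↑u * M * ↑u⁻¹ = N) (hN : N ^ 2 + N + 1 = 0) : M ^ 2 + M + 1 = 0 := by
  have : ConjAct.toConjAct u • (M ^ 2 + M + 1) = N ^ 2 + N + 1 := by
    rw [smul_add, smul_add, smul_pow', smul_one, ConjAct.units_smul_def,
      ConjAct.ofConjAct_toConjAct, h]
  rwa [hN, smul_eq_zero_iff_eq] at this

section RealVectorSpace

variable {V : Type*} [AddCommGroup V] [Module ℝ V] [FiniteDimensional ℝ V]

theorem even_finrank_of_sq_add_self_add_one_eq_zero {A : End ℝ V} (hA : A ^ 2 + A + 1 = 0) :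
    Even (finrank ℝ V) := by
  have hK : (2 * A + 1) * (2 * A + 1) = (-3 : ℝ) • 1 := by
    rw [two_mul_add_one_mul_self hA, neg_smul, ofNat_smul_eq_nsmul, nsmul_eq_mul, mul_one]; rfl
  have hdet := congrArg LinearMap.det hK
  rw [map_mul, LinearMap.det_smul, map_one, mul_one] at hdet
  by_contra hodd
  rw [(Nat.not_even_iff_odd.mp hodd).neg_pow] at hdet
  nlinarith [mul_self_nonneg (LinearMap.det (2 * A + 1)),
    pow_pos (three_pos : (0 : ℝ) < 3) (finrank ℝ V)]

theorem even_finrank_of_mem_invtSubmodule {A : End ℝ V} (hA : A ^ 2 + A + 1 = 0)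
    {W : Submodule ℝ V} (hW : W ∈ A.invtSubmodule) : Even (finrank ℝ W) := by
  refine even_finrank_of_sq_add_self_add_one_eq_zero (A := A.restrict hW) ?_
  ext w
  simp only [pow_two, Module.End.mul_apply, LinearMap.add_apply, Module.End.one_apply,
    Submodule.coe_add, LinearMap.zero_apply, ZeroMemClass.coe_zero]
  exact congrArg (· (w : V)) hA

theorem exists_invtPlane_of_commute_of_mul_self_eq_neg_one [Nontrivial V] {J S : End ℝ V}
    (hJ : J * J = -1) (hS : Commute S J) :
    ∃ W : Submodule ℝ V, W ∈ J.invtSubmodule ∧ W ∈ S.invtSubmodule ∧ finrank ℝ W = 2 := by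
  let φ := Complex.lift ⟨J, hJ⟩
  let _ : Module ℂ V := Module.compHom V φ.toRingHom
  have hsmul : ∀ (z : ℂ) (v : V), z • v = φ z v := fun _ _ => rfl
  have _ : IsScalarTower ℝ ℂ V :=
    ⟨fun r z v => by simp only [hsmul, map_smul, LinearMap.smul_apply]⟩
  have _ : FiniteDimensional ℂ V := Module.Finite.of_restrictScalars_finite ℝ ℂ V
  have hφS : ∀ z, Commute S (φ z) := fun z => by
    simp only [φ, Complex.lift_apply, Complex.liftAux_apply]
    exact (Algebra.commute_algebraMap_right _ _).add_right (hS.smul_right _)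
  let Sℂ : End ℂ V :=
    { S with map_smul' := fun z v => by simp [hsmul, ← Module.End.mul_apply, (hφS z).eq] }
  obtain ⟨μ, hμ⟩ := Sℂ.exists_eigenvalue
  obtain ⟨v, hv⟩ := hμ.exists_hasEigenvector
  refine ⟨(ℂ ∙ v).restrictScalars ℝ, fun w hw => ?_, fun w hw => ?_, ?_⟩
  · show J w ∈ ℂ ∙ v
    rw [show J w = Complex.I • w by rw [hsmul]; simp [φ]]
    exact (ℂ ∙ v).smul_mem Complex.I hw
  · obtain ⟨c, rfl⟩ := Submodule.mem_span_singleton.mp hw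
    show Sℂ (c • v) ∈ ℂ ∙ v
    rw [map_smul, hv.apply_eq_smul, smul_smul]
    exact Submodule.smul_mem _ _ (Submodule.mem_span_singleton_self v)
  · show finrank ℝ (ℂ ∙ v) = 2
    rw [← Module.finrank_mul_finrank ℝ ℂ, Complex.finrank_real_complex,
      finrank_span_singleton hv.2]

theorem exists_invtPlane_of_commute [Nontrivial V] {A P : End ℝ V} (hA : A ^ 2 + A + 1 = 0)
    (hP : Commute P A) :
    ∃ W : Submodule ℝ V, W ∈ A.invtSubmodule ∧ W ∈ P.invtSubmodule ∧ finrank ℝ W = 2 := by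
  have hPJ : Commute P ((√3)⁻¹ • (2 * A + 1)) :=
    (((Commute.ofNat_right P 2).mul_right hP).add_right (Commute.one_right P)).smul_right _
  obtain ⟨W, hWJ, hWP, hW⟩ := exists_invtPlane_of_commute_of_mul_self_eq_neg_one
    (mul_self_eq_neg_one_of_sq_add_self_add_one hA) hPJ
  refine ⟨W, fun w hw => ?_, hWP, hW⟩
  have hAw : (2 : ℝ) • A w = √3 • ((√3)⁻¹ • (2 * A + 1)) w - w := by
    simp [smul_smul, two_smul]
  show A w ∈ W
  rw [← W.smul_mem_iff (two_ne_zero : (2 : ℝ) ≠ 0), hAw]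
  exact W.sub_mem (W.smul_mem _ (hWJ hw)) hw

theorem exists_invtPlane_of_ne_zero (hV : finrank ℝ V = 4) {A P Q : End ℝ V}
    (hA : A ^ 2 + A + 1 = 0) (hQ : Q * A = A ^ 2 * Q) (hPQ : Commute P Q) (hQQ : Q * Q = 0)
    (hQ0 : Q ≠ 0) :
    ∃ W : Submodule ℝ V, W ∈ A.invtSubmodule ∧ W ∈ P.invtSubmodule ∧ W ∈ Q.invtSubmodule ∧
      finrank ℝ W = 2 := by
  have hWA : LinearMap.ker Q ∈ A.invtSubmodule := fun w (hw : Q w = 0) =>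
    show Q (A w) = 0 by rw [← Module.End.mul_apply, hQ, Module.End.mul_apply, hw, map_zero]
  refine ⟨LinearMap.ker Q, hWA, fun w (hw : Q w = 0) => ?_, fun w _ => ?_, ?_⟩
  · show Q (P w) = 0
    rw [← Module.End.mul_apply, ← hPQ.eq, Module.End.mul_apply, hw, map_zero]
  · show Q (Q w) = 0
    rw [← Module.End.mul_apply, hQQ, LinearMap.zero_apply]
  · have hbot : LinearMap.ker Q ≠ ⊥ := by
      intro h
      apply hQ0
      rw [← LinearMap.range_eq_bot, eq_bot_iff, ← h]
      exact LinearMap.range_le_ker_iff.mpr hQQ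
    have hpos := Submodule.finrank_eq_zero.not.mpr hbot
    have hlt := Submodule.finrank_lt (fun h => hQ0 (LinearMap.ker_eq_top.mp h))
    obtain ⟨k, hk⟩ := even_finrank_of_mem_invtSubmodule hA hWA
    omega

theorem exists_invtPlane (hV : finrank ℝ V = 4) {A P Q : End ℝ V} (hA : A ^ 2 + A + 1 = 0)
    (hP : Commute P A) (hQ : Q * A = A ^ 2 * Q) (hPQ : Commute P Q) (hQQ : Q * Q = 0) :
    ∃ W : Submodule ℝ V, W ∈ A.invtSubmodule ∧ W ∈ P.invtSubmodule ∧ W ∈ Q.invtSubmodule ∧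
      finrank ℝ W = 2 := by
  by_cases hQ0 : Q = 0
  · have : Nontrivial V := Module.nontrivial_of_finrank_eq_succ hV
    obtain ⟨W, hWA, hWP, hW⟩ := exists_invtPlane_of_commute hA hP
    exact ⟨W, hWA, hWP, by simp [hQ0], hW⟩
  · exact exists_invtPlane_of_ne_zero hV hA hQ hPQ hQQ hQ0

theorem exists_invtPlane_of_commute_conj (hV : finrank ℝ V = 4) {A S : End ℝ V}
    (hA : A ^ 2 + A + 1 = 0) (hS : Commute S (A * S * A ^ 2)) :
    ∃ W : Submodule ℝ V, W ∈ A.invtSubmodule ∧ W ∈ S.invtSubmodule ∧ finrank ℝ W = 2 := by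
  have h3 : IsUnit (3 : End ℝ V) := by
    rw [← map_ofNat (algebraMap ℝ (End ℝ V)) 3]
    exact (IsUnit.mk0 _ three_ne_zero).map _
  obtain ⟨P, Q, hPQS, hP, hQ, hPQ, hQQ⟩ := exists_commute_and_mul_self_eq_zero hA h3 hS
  obtain ⟨W, hWA, hWP, hWQ, hW⟩ := exists_invtPlane hV hA hP hQ hPQ hQQ
  refine ⟨W, hWA, fun w hw => ?_, hW⟩
  have : (P + Q) w ∈ W := W.add_mem (hWP hw) (hWQ hw)
  rwa [hPQS, Module.End.mul_apply, Module.End.ofNat_apply, ← ofNat_smul_eq_nsmul (R := ℝ),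
    W.smul_mem_iff three_ne_zero] at this

end RealVectorSpace

section InvariantSubgroup

variable {K V : Type*} [Field K] [AddCommGroup V] [Module K V] [FiniteDimensional K V]

theorem Module.End.mem_invtSubmodule_of_mul_eq_one {f g : End K V} (hgf : g * f = 1)
    {W : Submodule K V} (hW : W ∈ f.invtSubmodule) : W ∈ g.invtSubmodule := by
  have hinj : Function.Injective f := fun x y hxy => by
    simpa [← Module.End.mul_apply, hgf] using congrArg g hxy
  have hmap : W.map f = W := Submodule.eq_of_le_of_finrank_eq
    ((Module.End.mem_invtSubmodule_iff_map_le f).mp hW)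
    (Submodule.equivMapOfInjective f hinj W).finrank_eq.symm
  intro w hw
  rw [← hmap] at hw
  obtain ⟨u, hu, rfl⟩ := hw
  show g (f u) ∈ W
  rwa [← Module.End.mul_apply, hgf, Module.End.one_apply]

variable {G : Type*} [Group G]

def MonoidHom.invtSubgroup (φ : G →* End K V) (W : Submodule K V) : Subgroup G where
  carrier := {g | W ∈ (φ g).invtSubmodule}
  one_mem' := by simp
  mul_mem' {g h} hg hh := by
    show W ∈ (φ (g * h)).invtSubmodule
    rw [map_mul]
    exact Module.End.invtSubmodule.comp _ hg hh
  inv_mem' {g} hg :=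
    Module.End.mem_invtSubmodule_of_mul_eq_one (by rw [← map_mul, inv_mul_cancel, map_one]) hg

end InvariantSubgroup

theorem turnoverGroup_rels :
    ga ^ 3 = 1 ∧ (PresentedGroup.of 1 : TurnoverGroup) ^ 3 = 1 ∧
      (ga * PresentedGroup.of 1) ^ 3 = 1 := by
  refine ⟨?_, ?_, ?_⟩ <;>
  · simp only [ga, PresentedGroup.of, ← map_mul, ← map_pow]
    exact PresentedGroup.one_of_mem (by simp [turnoverRels])

theorem closure_ga_ga_mul_inv_eq_top :
    Subgroup.closure {ga, ga * (PresentedGroup.of 1)⁻¹} = (⊤ : Subgroup TurnoverGroup) := by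
  set H := Subgroup.closure {ga, ga * (PresentedGroup.of 1 : TurnoverGroup)⁻¹}
  have ha : ga ∈ H := Subgroup.subset_closure (Set.mem_insert _ _)
  have hs : ga * (PresentedGroup.of 1)⁻¹ ∈ H :=
    Subgroup.subset_closure (Set.mem_insert_of_mem _ rfl)
  rw [eq_top_iff, ← PresentedGroup.closure_range_of, Subgroup.closure_le]
  rintro _ ⟨i, rfl⟩
  fin_cases i
  · exact ha
  · simpa using mul_mem (inv_mem hs) ha

theorem rotRot_sq_add_self_add_one : rotRot ^ 2 + rotRot + 1 = 0 := by
  have h3 : √3 * √3 = 3 := Real.mul_self_sqrt (by norm_num)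
  ext i j
  fin_cases i <;> fin_cases j <;> simp [rotRot, pow_two] <;> linarith

theorem invariant_plane_of_rotRot_general
    (ρ : TurnoverGroup →* Matrix.SpecialLinearGroup (Fin 4) ℝ)
    (hconj : ∃ g : GL (Fin 4) ℝ,
      (g : Matrix (Fin 4) (Fin 4) ℝ) * (ρ ga : Matrix (Fin 4) (Fin 4) ℝ) *
        ((g⁻¹ : GL (Fin 4) ℝ) : Matrix (Fin 4) (Fin 4) ℝ) = rotRot) :
    ∃ W : Submodule ℝ (Fin 4 → ℝ),
      (∀ γ : TurnoverGroup, ∀ w ∈ W, (ρ γ : Matrix (Fin 4) (Fin 4) ℝ) *ᵥ w ∈ W) ∧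
      Module.finrank ℝ W = 2 := by
  obtain ⟨g, hg⟩ := hconj
  obtain ⟨ha, hb, hab⟩ := turnoverGroup_rels
  set b : TurnoverGroup := PresentedGroup.of 1
  let φ : TurnoverGroup →* End ℝ (Fin 4 → ℝ) :=
    (toLinAlgEquiv' : Matrix (Fin 4) (Fin 4) ℝ ≃ₐ[ℝ] _).toRingEquiv.toMonoidHom.comp
      (SpecialLinearGroup.coeMonoidHom.comp ρ)
  have hA : φ ga ^ 2 + φ ga + 1 = 0 := by
    simpa [φ] using congrArg (toLinAlgEquiv' : Matrix (Fin 4) (Fin 4) ℝ ≃ₐ[ℝ] _)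
      (sq_add_self_add_one_eq_zero_of_conj g hg rotRot_sq_add_self_add_one)
  have hS : Commute (φ (ga * b⁻¹)) (φ ga * φ (ga * b⁻¹) * φ ga ^ 2) := by
    have := (commute_mul_inv_conj ha hb hab).map φ
    rwa [map_mul φ _ (ga ^ 2), map_mul φ ga (ga * b⁻¹), map_pow] at this
  obtain ⟨W, hWA, hWS, hW⟩ := exists_invtPlane_of_commute_conj (by simp) hA hS
  have htop : φ.invtSubgroup W = ⊤ := by
    rw [eq_top_iff, ← closure_ga_ga_mul_inv_eq_top, Subgroup.closure_le]
    exact Set.insert_subset hWA (Set.singleton_subset_iff.mpr hWS)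
  exact ⟨W, fun γ => htop.ge (Subgroup.mem_top γ), hW⟩

/-- A semisimple representation `ρ : Γ → SL(4,ℝ)` of the turnover group with `ρ(a)`
conjugate to `R ⊕ R` admits a `2`-dimensional invariant subspace. -/
theorem invariant_plane_of_rotRot
    (ρ : TurnoverGroup →* Matrix.SpecialLinearGroup (Fin 4) ℝ)
    (hss : IsSemisimpleRep ρ)
    (hconj : ∃ g : GL (Fin 4) ℝ,
      (g : Matrix (Fin 4) (Fin 4) ℝ) * (ρ ga : Matrix (Fin 4) (Fin 4) ℝ) *
        ((g⁻¹ : GL (Fin 4) ℝ) : Matrix (Fin 4) (Fin 4) ℝ) = rotRot) :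
    ∃ W : Submodule ℝ (Fin 4 → ℝ),
      (∀ γ : TurnoverGroup, ∀ w ∈ W, (ρ γ : Matrix (Fin 4) (Fin 4) ℝ) *ᵥ w ∈ W) ∧
      Module.finrank ℝ W = 2 :=
  invariant_plane_of_rotRot_general ρ hconj
end
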